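/- Let X₁, X₂ and Y be Banach spaces, let X = X₁ ⊕_1 X₂, and let T : X → Y be a bounded linear operator with restrictions T₁ and T₂. If T₁ and T₂ are strong Daugavet operators, then T is a strong Daugavet operator. -/

import Mathlib

/-!
Split `x`, `y` into their components. On each component, applying the strong Daugavet property of
`Tᵢ` to the normalised vectors and rescaling gives `zᵢ` with `‖zᵢ‖ = ‖yᵢ‖`,
`‖xᵢ + zᵢ‖ ≥ ‖xᵢ‖ + ‖yᵢ‖ - ε/2` and `‖Tᵢ (yᵢ - zᵢ)‖ ≤ ε/2`. Since the norm of `X₁ ⊕₁ X₂` is the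
sum of the norms of the components, `z = (z₁, z₂)` is a witness for `T`.
-/

/-- A bounded linear operator `T : X → Y` is a *strong Daugavet operator* if for every
`x, y` in the unit sphere of `X` and every `ε > 0` there is `z` in the unit sphere with
`‖x + z‖ ≥ 2 - ε` and `‖T (y - z)‖ ≤ ε`. -/
def IsStrongDaugavet {X Y : Type*} [NormedAddCommGroup X] [NormedSpace ℝ X]
    [NormedAddCommGroup Y] [NormedSpace ℝ Y] (T : X →L[ℝ] Y) : Prop :=
  ∀ x y : X, ‖x‖ = 1 → ‖y‖ = 1 → ∀ ε : ℝ, 0 < ε →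
    ∃ z : X, ‖z‖ = 1 ∧ 2 - ε ≤ ‖x + z‖ ∧ ‖T (y - z)‖ ≤ ε

section NormedSpace

variable {X : Type*} [NormedAddCommGroup X] [NormedSpace ℝ X]

lemma mul_norm_add_sub_sub_le_norm_smul_add_smul {u v : X} (hu : ‖u‖ = 1) {a b : ℝ}
    (hb : 0 ≤ b) (hab : a ≤ b) :
    b * ‖u + v‖ - (b - a) ≤ ‖a • u + b • v‖ := by
  have hsplit : a • u + b • v = b • (u + v) - (b - a) • u := by module
  calc b * ‖u + v‖ - (b - a) = ‖b • (u + v)‖ - ‖(b - a) • u‖ := by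
        rw [norm_smul, norm_smul, Real.norm_of_nonneg hb, Real.norm_of_nonneg (sub_nonneg.2 hab),
          hu, mul_one]
    _ ≤ ‖a • u + b • v‖ := hsplit ▸ norm_sub_norm_le _ _

lemma add_add_norm_add_sub_two_le_norm_smul_add_smul {u v : X} (hu : ‖u‖ = 1) (hv : ‖v‖ = 1)
    {a b : ℝ} (ha : 0 ≤ a) (hb : 0 ≤ b) (ha₁ : a ≤ 1) (hb₁ : b ≤ 1) :
    a + b + ‖u + v‖ - 2 ≤ ‖a • u + b • v‖ := by
  have huv : ‖u + v‖ ≤ 2 := (norm_add_le u v).trans_eq (by rw [hu, hv]; norm_num)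
  rcases le_total a b with hab | hba
  · nlinarith [mul_norm_add_sub_sub_le_norm_smul_add_smul (v := v) hu hb hab]
  · have := mul_norm_add_sub_sub_le_norm_smul_add_smul (v := u) hv ha hba
    rw [add_comm v, add_comm (b • v)] at this
    nlinarith

lemma exists_norm_eq_one_and_norm_smul_eq [Nontrivial X] (x : X) :
    ∃ u : X, ‖u‖ = 1 ∧ ‖x‖ • u = x := by
  rcases eq_or_ne x 0 with rfl | hx
  · obtain ⟨u, hu⟩ := exists_norm_eq X zero_le_one
    exact ⟨u, hu, by simp⟩
  · exact ⟨‖x‖⁻¹ • x, by simp [norm_smul, hx], smul_inv_smul₀ (norm_ne_zero_iff.2 hx) x⟩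

end NormedSpace

/-- The strong Daugavet property, extended by homogeneity from the unit sphere to the unit ball. -/
theorem IsStrongDaugavet.exists_of_norm_le_one {X Y : Type*}
    [NormedAddCommGroup X] [NormedSpace ℝ X] [NormedAddCommGroup Y] [NormedSpace ℝ Y]
    {T : X →L[ℝ] Y} (hT : IsStrongDaugavet T) {x y : X} (hx : ‖x‖ ≤ 1) (hy : ‖y‖ ≤ 1)
    {ε : ℝ} (hε : 0 < ε) :
    ∃ z : X, ‖z‖ = ‖y‖ ∧ ‖x‖ + ‖y‖ - ε ≤ ‖x + z‖ ∧ ‖T (y - z)‖ ≤ ε := by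
  rcases subsingleton_or_nontrivial X with hX | hX
  · refine ⟨y, rfl, ?_, by simpa using hε.le⟩
    simp [Subsingleton.elim x 0, Subsingleton.elim y 0, hε.le]
  obtain ⟨u, hu, hxu⟩ := exists_norm_eq_one_and_norm_smul_eq x
  obtain ⟨v, hv, hyv⟩ := exists_norm_eq_one_and_norm_smul_eq y
  obtain ⟨w, hw, huw, hvw⟩ := hT u v hu hv ε hε
  refine ⟨‖y‖ • w, by rw [norm_smul, norm_norm, hw, mul_one], ?_, ?_⟩
  · calc ‖x‖ + ‖y‖ - ε ≤ ‖x‖ + ‖y‖ + ‖u + w‖ - 2 := by linarith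
      _ ≤ ‖‖x‖ • u + ‖y‖ • w‖ :=
        add_add_norm_add_sub_two_le_norm_smul_add_smul hu hw (norm_nonneg x) (norm_nonneg y) hx hy
      _ = ‖x + ‖y‖ • w‖ := by rw [hxu]
  · have hyw : y - ‖y‖ • w = ‖y‖ • (v - w) := by rw [smul_sub, hyv]
    calc ‖T (y - ‖y‖ • w)‖ = ‖y‖ * ‖T (v - w)‖ := by rw [hyw, map_smul, norm_smul, norm_norm]
      _ ≤ 1 * ε := mul_le_mul hy hvw (norm_nonneg _) zero_le_one
      _ = ε := one_mul ε

lemma WithLp.toLp_fst_zero_add_toLp_zero_snd {α β : Type*} [AddCommGroup α] [AddCommGroup β]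
    (p : ENNReal) (w : WithLp p (α × β)) :
    toLp p (w.fst, 0) + toLp p (0, w.snd) = w := by
  rw [← toLp_add, Prod.mk_add_mk, add_zero, zero_add]
  rfl

theorem strongDaugavet_of_restrictions_oneSum_general
    {X₁ X₂ Y : Type*}
    [NormedAddCommGroup X₁] [NormedSpace ℝ X₁]
    [NormedAddCommGroup X₂] [NormedSpace ℝ X₂]
    [NormedAddCommGroup Y] [NormedSpace ℝ Y]
    (T : WithLp 1 (X₁ × X₂) →L[ℝ] Y)
    (T₁ : X₁ →L[ℝ] Y) (T₂ : X₂ →L[ℝ] Y)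
    (hT₁ : ∀ x₁ : X₁, T₁ x₁ = T ((WithLp.prodContinuousLinearEquiv 1 ℝ X₁ X₂).symm (x₁, 0)))
    (hT₂ : ∀ x₂ : X₂, T₂ x₂ = T ((WithLp.prodContinuousLinearEquiv 1 ℝ X₁ X₂).symm (0, x₂)))
    (h₁ : IsStrongDaugavet T₁) (h₂ : IsStrongDaugavet T₂) :
    IsStrongDaugavet T := by
  have hT : ∀ w, T w = T₁ w.fst + T₂ w.snd := fun w => by
    rw [hT₁, hT₂, WithLp.prodContinuousLinearEquiv_symm_apply,
      WithLp.prodContinuousLinearEquiv_symm_apply, ← map_add,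
      WithLp.toLp_fst_zero_add_toLp_zero_snd]
  intro x y hx hy ε hε
  rw [WithLp.prod_norm_eq_of_L1] at hx hy
  obtain ⟨z₁, hz₁, hxz₁, hTz₁⟩ := h₁.exists_of_norm_le_one (x := x.fst) (y := y.fst)
    (by linarith [norm_nonneg x.snd]) (by linarith [norm_nonneg y.snd]) (half_pos hε)
  obtain ⟨z₂, hz₂, hxz₂, hTz₂⟩ := h₂.exists_of_norm_le_one (x := x.snd) (y := y.snd)
    (by linarith [norm_nonneg x.fst]) (by linarith [norm_nonneg y.fst]) (half_pos hε)
  refine ⟨WithLp.toLp 1 (z₁, z₂), ?_, ?_, ?_⟩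
  · rw [WithLp.prod_norm_eq_of_L1]
    simpa [hz₁, hz₂] using hy
  · rw [WithLp.prod_norm_eq_of_L1]
    simp only [WithLp.add_fst, WithLp.add_snd, WithLp.toLp_fst, WithLp.toLp_snd]
    linarith
  · rw [hT]
    simp only [WithLp.sub_fst, WithLp.sub_snd, WithLp.toLp_fst, WithLp.toLp_snd]
    linarith [norm_add_le (T₁ (y.fst - z₁)) (T₂ (y.snd - z₂))]

theorem strongDaugavet_of_restrictions_oneSum
    {X₁ X₂ Y : Type*}
    [NormedAddCommGroup X₁] [NormedSpace ℝ X₁] [CompleteSpace X₁]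
    [NormedAddCommGroup X₂] [NormedSpace ℝ X₂] [CompleteSpace X₂]
    [NormedAddCommGroup Y] [NormedSpace ℝ Y] [CompleteSpace Y]
    (T : WithLp 1 (X₁ × X₂) →L[ℝ] Y)
    (T₁ : X₁ →L[ℝ] Y) (T₂ : X₂ →L[ℝ] Y)
    (hT₁ : ∀ x₁ : X₁, T₁ x₁ = T ((WithLp.prodContinuousLinearEquiv 1 ℝ X₁ X₂).symm (x₁, 0)))
    (hT₂ : ∀ x₂ : X₂, T₂ x₂ = T ((WithLp.prodContinuousLinearEquiv 1 ℝ X₁ X₂).symm (0, x₂)))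
    (h₁ : IsStrongDaugavet T₁) (h₂ : IsStrongDaugavet T₂) :
    IsStrongDaugavet T :=
  strongDaugavet_of_restrictions_oneSum_general T T₁ T₂ hT₁ hT₂ h₁ h₂
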